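/- arXiv:1506.04257 — 2 statements merged into one kernel-verified Lean document; each statement's English description precedes it below -/
import Mathlib

section
/- (Outer bound, single model) Let Q be a full-support distribution on n categories, ε ∈ (0,1), and X a dataset of p samples with empirical distribution P̂(X) = P̂^ℓ. If D(P̂(X)||Q) ≥ (1/p)·log(1/ε) + (2n/p)·log(p+1), then for any ordering P̂^1, P̂^2, … of types with P_Q(P̂^1) ≤ P_Q(P̂^2) ≤ …, we have P_Q({P̂^1, …, P̂^ℓ}) ≤ ε (i.e., X is contaminated at significance level ε). -/
open scoped Classical

/-- `P` is a probability mass function on `n` categories. -/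
def isPMF {n : ℕ} (P : Fin n → ℝ) : Prop :=
  (∀ i, 0 ≤ P i) ∧ ∑ i, P i = 1

/-- Kullback–Leibler divergence `D(P‖Q) = ∑ i, P i * log (P i / Q i)`. -/
noncomputable def KL {n : ℕ} (P Q : Fin n → ℝ) : ℝ :=
  ∑ i, P i * Real.log (P i / Q i)

/-- Empirical distribution (type) of the sequence `x` of `p` samples over `n` categories. -/
noncomputable def emp {n p : ℕ} (x : Fin p → Fin n) (i : Fin n) : ℝ :=
  ((Finset.univ.filter (fun j => x j = i)).card : ℝ) / p

/-- Probability of observing the sequence `x` under `p` i.i.d. draws from `Q`. -/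
noncomputable def seqProb {n p : ℕ} (Q : Fin n → ℝ) (x : Fin p → Fin n) : ℝ :=
  ∏ j, Q (x j)

/-- Probability, under `p` i.i.d. draws from `Q`, that the empirical distribution
equals `P` exactly. -/
noncomputable def typeProb (p : ℕ) {n : ℕ} (Q : Fin n → ℝ) (P : Fin n → ℝ) : ℝ :=
  ∑ x : Fin p → Fin n, if emp x = P then seqProb Q x else 0

/-- Probability, under `p` i.i.d. draws from `Q`, that the empirical distribution
lies in the set `S`. -/
noncomputable def setProb (p : ℕ) {n : ℕ} (Q : Fin n → ℝ) (S : Set (Fin n → ℝ)) : ℝ :=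
  ∑ x : Fin p → Fin n, if emp x ∈ S then seqProb Q x else 0

/-!
Sequences of the same type `P` all have the same probability, so the probability of the type
class of `P` under `Q` is `exp (-p D(P‖Q))` times its probability under `P`, which is at most `1`.
Since the listed types are ordered by probability and the type of `X` comes last, each of them
has probability at most `exp (-p D(emp X‖Q))`, and there are at most `(p + 1) ^ n` types.
The hypothesis on `D` gives `(p + 1) ^ n * exp (-p D) ≤ ε / (p + 1) ^ n ≤ ε`.
-/

open Real Finset

section Types

variable {n p : ℕ}

lemma emp_nonneg (x : Fin p → Fin n) (i : Fin n) : 0 ≤ emp x i := by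
  unfold emp; positivity

lemma card_filter_eq_mul_emp (hp : 0 < p) (x : Fin p → Fin n) (i : Fin n) :
    ((#{j | x j = i} : ℕ) : ℝ) = p * emp x i := by
  unfold emp; field_simp

lemma isPMF_emp (hp : 0 < p) (x : Fin p → Fin n) : isPMF (emp x) := by
  refine ⟨emp_nonneg x, ?_⟩
  have hcount : ∑ i : Fin n, ((#{j | x j = i} : ℕ) : ℝ) = p := by
    simpa using Finset.sum_fiberwise' (univ : Finset (Fin p)) x (fun _ => (1 : ℝ))
  simp only [emp, ← Finset.sum_div, hcount]
  exact div_self (by positivity)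

lemma seqProb_eq_prod_pow (Q : Fin n → ℝ) (x : Fin p → Fin n) :
    seqProb Q x = ∏ i, Q i ^ #{j | x j = i} := by
  rw [seqProb, ← Finset.prod_fiberwise' univ x Q]
  exact Finset.prod_congr rfl fun i _ => Finset.prod_const _

lemma seqProb_eq_exp (hp : 0 < p) {Q : Fin n → ℝ} {x : Fin p → Fin n}
    (hQ : ∀ i, emp x i ≠ 0 → 0 < Q i) :
    seqProb Q x = exp (p * ∑ i, emp x i * log (Q i)) := by
  rw [seqProb_eq_prod_pow, Finset.mul_sum, exp_sum]
  refine Finset.prod_congr rfl fun i _ => ?_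
  by_cases h0 : emp x i = 0
  · have : #{j | x j = i} = 0 := by
      have := card_filter_eq_mul_emp hp x i
      rw [h0, mul_zero] at this
      exact_mod_cast this
    simp [this, h0]
  · rw [← mul_assoc, ← card_filter_eq_mul_emp hp x i, exp_nat_mul, exp_log (hQ i h0)]

lemma KL_eq_sub {P Q : Fin n → ℝ} (hQ : ∀ i, Q i ≠ 0) :
    KL P Q = ∑ i, P i * log (P i) - ∑ i, P i * log (Q i) := by
  rw [KL, ← Finset.sum_sub_distrib]
  refine Finset.sum_congr rfl fun i _ => ?_
  by_cases hP : P i = 0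
  · simp [hP]
  · rw [log_div hP (hQ i), mul_sub]

lemma seqProb_eq_exp_neg_KL_mul (hp : 0 < p) {Q : Fin n → ℝ} (hQ : ∀ i, 0 < Q i)
    (x : Fin p → Fin n) :
    seqProb Q x = exp (-(p * KL (emp x) Q)) * seqProb (emp x) x := by
  rw [seqProb_eq_exp hp fun i _ => hQ i,
    seqProb_eq_exp hp fun i h => (emp_nonneg x i).lt_of_ne' h,
    KL_eq_sub fun i => (hQ i).ne', ← exp_add]
  ring_nf

lemma typeProb_eq_exp_neg_KL_mul (hp : 0 < p) {Q : Fin n → ℝ} (hQ : ∀ i, 0 < Q i)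
    (P : Fin n → ℝ) : typeProb p Q P = exp (-(p * KL P Q)) * typeProb p P P := by
  rw [typeProb, typeProb, Finset.mul_sum]
  refine Finset.sum_congr rfl fun x _ => ?_
  split_ifs with hx
  · rw [seqProb_eq_exp_neg_KL_mul hp hQ, hx]
  · rw [mul_zero]

lemma typeProb_le_one {Q : Fin n → ℝ} (hQ : isPMF Q) (P : Fin n → ℝ) :
    typeProb p Q P ≤ 1 :=
  calc typeProb p Q P ≤ ∑ x : Fin p → Fin n, seqProb Q x :=
        Finset.sum_le_sum fun x _ => by
          split_ifs
          · exact le_rfl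
          · exact Finset.prod_nonneg fun j _ => hQ.1 (x j)
    _ = (∑ i, Q i) ^ p := (Fintype.sum_pow Q p).symm
    _ = 1 := by rw [hQ.2, one_pow]

theorem typeProb_le_exp_neg_KL (hp : 0 < p) {Q : Fin n → ℝ} (hQ : ∀ i, 0 < Q i)
    {P : Fin n → ℝ} (hP : P ∈ Set.range (emp : (Fin p → Fin n) → Fin n → ℝ)) :
    typeProb p Q P ≤ exp (-(p * KL P Q)) := by
  obtain ⟨x, rfl⟩ := hP
  rw [typeProb_eq_exp_neg_KL_mul hp hQ]
  exact mul_le_of_le_one_right (exp_pos _).le (typeProb_le_one (isPMF_emp hp x) _)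

lemma setProb_coe_finset (Q : Fin n → ℝ) (V : Finset (Fin n → ℝ)) :
    setProb p Q V = ∑ P ∈ V, typeProb p Q P := by
  simp only [setProb, typeProb, Finset.mem_coe]
  rw [Finset.sum_comm]
  refine Finset.sum_congr rfl fun x _ => ?_
  rw [Finset.sum_ite_eq]

/-- A type is determined by its counts, each of which lies in `{0, …, p}`. -/
theorem card_le_of_subset_range_emp {V : Finset (Fin n → ℝ)}
    (hV : ↑V ⊆ Set.range (emp : (Fin p → Fin n) → Fin n → ℝ)) : #V ≤ (p + 1) ^ n := by
  let ofCounts : (Fin n → Fin (p + 1)) → Fin n → ℝ := fun k i => (k i : ℝ) / p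
  have hsub : V ⊆ univ.image ofCounts := by
    intro P hP
    obtain ⟨x, rfl⟩ := hV hP
    refine Finset.mem_image.2 ⟨fun i => ⟨#{j | x j = i}, Nat.lt_succ_of_le ?_⟩, mem_univ _, rfl⟩
    simpa using card_filter_le univ (x · = i)
  calc #V ≤ #(univ.image ofCounts) := card_le_card hsub
    _ ≤ #(univ : Finset (Fin n → Fin (p + 1))) := card_image_le
    _ = (p + 1) ^ n := by simp

end Types

lemma pow_mul_exp_neg_le {n : ℕ} {p ε D : ℝ} (hp : 0 < p) (hε : 0 < ε)
    (hD : D ≥ (1 / p) * log (1 / ε) + (2 * (n : ℝ) / p) * log (p + 1)) :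
    (p + 1) ^ n * exp (-(p * D)) ≤ ε := by
  have hpD : log (1 / ε) + 2 * n * log (p + 1) ≤ p * D := by
    have := mul_le_mul_of_nonneg_left hD hp.le
    field_simp at this
    linarith
  calc (p + 1) ^ n * exp (-(p * D)) ≤ (p + 1) ^ (2 * n) * exp (-(p * D)) := by
        gcongr
        · linarith
        · omega
    _ = exp ((2 * n : ℕ) * log (p + 1) - p * D) := by
        rw [sub_eq_add_neg, exp_add, exp_nat_mul, exp_log (by linarith)]
    _ ≤ exp (log ε) := by
        gcongr
        rw [one_div, log_inv] at hpD
        push_cast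
        linarith
    _ = ε := exp_log hε

theorem outer_bound_contaminated_general {n p L : ℕ} (Q : Fin n → ℝ) (ε : ℝ)
    (X : Fin p → Fin n) (T : Fin (L + 1) → (Fin n → ℝ))
    (hp : 0 < p) (hQpos : ∀ i, 0 < Q i)
    (hε0 : 0 < ε)
    (htype : ∀ i, ∃ x : Fin p → Fin n, emp x = T i)
    (hmono : ∀ i j : Fin (L + 1), i ≤ j → typeProb p Q (T i) ≤ typeProb p Q (T j))
    (hlast : T (Fin.last L) = emp X)
    (hD : KL (emp X) Q ≥
      (1 / (p : ℝ)) * Real.log (1 / ε) + (2 * (n : ℝ) / p) * Real.log ((p : ℝ) + 1)) :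
    setProb p Q (Set.range T) ≤ ε := by
  set V := univ.image T
  have hV : (V : Set (Fin n → ℝ)) = Set.range T := by simp [V]
  have hmax : ∀ P ∈ V, typeProb p Q P ≤ exp (-(p * KL (emp X) Q)) := by
    simp only [V, Finset.mem_image, mem_univ, true_and]
    rintro _ ⟨i, rfl⟩
    calc typeProb p Q (T i) ≤ typeProb p Q (T (Fin.last L)) := hmono _ _ (Fin.le_last i)
      _ = typeProb p Q (emp X) := by rw [hlast]
      _ ≤ _ := typeProb_le_exp_neg_KL hp hQpos ⟨X, rfl⟩
  have hcard : (#V : ℝ) ≤ ((p : ℝ) + 1) ^ n := by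
    have hsub : ↑V ⊆ Set.range (emp : (Fin p → Fin n) → Fin n → ℝ) :=
      hV ▸ Set.range_subset_iff.2 htype
    exact_mod_cast card_le_of_subset_range_emp hsub
  calc setProb p Q (Set.range T) = ∑ P ∈ V, typeProb p Q P := by rw [← hV, setProb_coe_finset]
    _ ≤ #V * exp (-(p * KL (emp X) Q)) := by
        simpa using Finset.sum_le_card_nsmul V _ _ hmax
    _ ≤ ((p : ℝ) + 1) ^ n * exp (-(p * KL (emp X) Q)) := by gcongr
    _ ≤ ε := pow_mul_exp_neg_le (by exact_mod_cast hp) hε0 hD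

theorem outer_bound_contaminated {n p L : ℕ} (Q : Fin n → ℝ) (ε : ℝ)
    (X : Fin p → Fin n) (T : Fin (L + 1) → (Fin n → ℝ))
    (hp : 0 < p) (hQ : isPMF Q) (hQpos : ∀ i, 0 < Q i)
    (hε0 : 0 < ε) (hε1 : ε < 1)
    (htype : ∀ i, ∃ x : Fin p → Fin n, emp x = T i)
    (hmono : ∀ i j : Fin (L + 1), i ≤ j → typeProb p Q (T i) ≤ typeProb p Q (T j))
    (hlast : T (Fin.last L) = emp X)
    (hD : KL (emp X) Q ≥
      (1 / (p : ℝ)) * Real.log (1 / ε) + (2 * (n : ℝ) / p) * Real.log ((p : ℝ) + 1)) :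
    setProb p Q (Set.range T) ≤ ε :=
  outer_bound_contaminated_general Q ε X T hp hQpos hε0 htype hmono hlast hD
end

section
/- For fixed α ∈ [0,1) and fixed ε ∈ (0,1), the threshold function γ(α,p) = (1/(p(1−α)))·log(1/ε) + (2n/(p(1−α)))·log(p(1−α)+1) is strictly increasing in α on [0,1) for fixed p ≥ 1, and tends to 0 as p → ∞ for fixed α; consequently α_L(p) = max{α : D*_α ≥ γ(α,p)} is non-decreasing in p and converges to κ(P̂||Q) as p → ∞, and α_L(p) ≤ κ(P̂||Q) for all p. -/
/-- Separation distance `κ(P‖Q) = max_i (1 - P i / Q i)`. -/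
noncomputable def sepDist {n : ℕ} [NeZero n] (P Q : Fin n → ℝ) : ℝ :=
  Finset.univ.sup' Finset.univ_nonempty (fun i => 1 - P i / Q i)

/-- `D*_α`: the minimum of `D(P‖Q)` over the probability distributions `P` with
`P i ≤ P̂ i / (1 - α)` for all `i`. -/
noncomputable def Dstar {n : ℕ} (Phat Q : Fin n → ℝ) (α : ℝ) : ℝ :=
  sInf ((fun P => KL P Q) '' {P : Fin n → ℝ | isPMF P ∧ ∀ i, P i ≤ Phat i / (1 - α)})

/-- The threshold `γ(α, p)` from Proposition 1. -/
noncomputable def gammaL (n : ℕ) (ε : ℝ) (α : ℝ) (p : ℕ) : ℝ :=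
  (1 / ((p : ℝ) * (1 - α))) * Real.log (1 / ε) +
    (2 * (n : ℝ) / ((p : ℝ) * (1 - α))) * Real.log ((p : ℝ) * (1 - α) + 1)

/-- `α_L(p) = max {α ∈ [0,1) : D*_α ≥ γ(α, p)}`. -/
noncomputable def alphaL {n : ℕ} (Phat Q : Fin n → ℝ) (ε : ℝ) (p : ℕ) : ℝ :=
  sSup {α : ℝ | α ∈ Set.Ico (0 : ℝ) 1 ∧ gammaL n ε α p ≤ Dstar Phat Q α}

/-!
`γ(α, p)` depends on `(α, p)` only through `t = p (1 - α)`, as `(log (1/ε) + 2n log (t + 1)) / t`,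
which is positive, strictly decreasing (concavity of `log`) and tends to `0` as `t → ∞`.
Writing `D(P‖Q) = ∑ Q i · klFun (P i / Q i)`, every feasible `P` has, at a coordinate `i` where
`κ` is attained, `P i / Q i ≤ r := P̂ i / ((1 - α) Q i)`, and `r < 1` as soon as `α < κ`;
since `klFun` decreases on `[0, 1]`, `D*_α ≥ Q i · klFun r > 0`. For `α ≥ κ` the point `Q` itself
is feasible, so `D*_α ≤ 0 < γ`. Hence `α_L(p) ≤ κ`, `α_L` grows with `p` because `γ` decreases
in `p`, and every `α < κ` lies below `α_L(p)` once `γ(α, p) < D*_α`.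
-/

open Real Filter Topology InformationTheory

lemma strictAntiOn_log_add_one_div : StrictAntiOn (fun t : ℝ => log (t + 1) / t) (Set.Ioi 0) := by
  intro s (hs : 0 < s) t (ht : 0 < t) hst
  have key := strictConcaveOn_log_Ioi.secant_strict_mono (a := 1) (x := 1 + s) (y := 1 + t)
    (Set.mem_Ioi.2 one_pos) (Set.mem_Ioi.2 (by linarith)) (Set.mem_Ioi.2 (by linarith))
    (by linarith : (1 : ℝ) < 1 + s).ne' (by linarith : (1 : ℝ) < 1 + t).ne' (by linarith)
  simpa [add_comm] using key

lemma tendsto_log_add_one_div_atTop :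
    Tendsto (fun t : ℝ => log (t + 1) / t) atTop (𝓝 0) := by
  have h := (tendsto_pow_log_div_mul_add_atTop 1 (-1) 1 one_ne_zero).comp
    (tendsto_atTop_add_const_right atTop 1 tendsto_id)
  refine h.congr fun t => ?_
  simp

lemma strictAntiOn_div_add_mul_log_add_one_div {c d : ℝ} (hc : 0 < c) (hd : 0 ≤ d) :
    StrictAntiOn (fun t : ℝ => (c + d * log (t + 1)) / t) (Set.Ioi 0) := by
  intro s (hs : 0 < s) t ht hst
  have hlog := strictAntiOn_log_add_one_div hs ht hst
  simp only at hlog ⊢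
  rw [add_div, add_div, mul_div_assoc, mul_div_assoc]
  exact add_lt_add_of_lt_of_le (div_lt_div_of_pos_left hc hs hst)
    (mul_le_mul_of_nonneg_left hlog.le hd)

lemma tendsto_div_add_mul_log_add_one_div_atTop (c d : ℝ) :
    Tendsto (fun t : ℝ => (c + d * log (t + 1)) / t) atTop (𝓝 0) := by
  have h := (tendsto_inv_atTop_zero.const_mul c).add (tendsto_log_add_one_div_atTop.const_mul d)
  simp only [mul_zero, add_zero] at h
  refine h.congr fun t => ?_
  ring

lemma gammaL_eq (n : ℕ) (ε α : ℝ) (p : ℕ) :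
    gammaL n ε α p =
      (log (1 / ε) + 2 * n * log (p * (1 - α) + 1)) / (p * (1 - α)) := by
  unfold gammaL
  ring

lemma log_one_div_pos {ε : ℝ} (hε0 : 0 < ε) (hε1 : ε < 1) : 0 < log (1 / ε) :=
  log_pos ((one_lt_div hε0).2 hε1)

section gammaL

variable {n : ℕ} {ε α : ℝ} {p : ℕ}

lemma natCast_mul_one_sub_pos (hp : 1 ≤ p) (hα : α < 1) : 0 < (p : ℝ) * (1 - α) :=
  mul_pos (by exact_mod_cast hp) (by linarith)

lemma gammaL_pos (hε0 : 0 < ε) (hε1 : ε < 1) (hp : 1 ≤ p) (hα : α < 1) :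
    0 < gammaL n ε α p := by
  have hlogε := log_one_div_pos hε0 hε1
  have ht := natCast_mul_one_sub_pos hp hα
  have hlogt : 0 ≤ log (p * (1 - α) + 1) := log_nonneg (by linarith)
  rw [gammaL_eq]
  positivity

lemma gammaL_strictMonoOn (hε0 : 0 < ε) (hε1 : ε < 1) (hp : 1 ≤ p) :
    StrictMonoOn (fun α => gammaL n ε α p) (Set.Ico 0 1) := by
  have hγ := strictAntiOn_div_add_mul_log_add_one_div (log_one_div_pos hε0 hε1)
    (by positivity : (0 : ℝ) ≤ 2 * n)
  have hscale : StrictAntiOn (fun α : ℝ => (p : ℝ) * (1 - α)) (Set.Ico 0 1) :=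
    fun _ _ _ _ hαβ => mul_lt_mul_of_pos_left (by linarith) (by exact_mod_cast hp)
  have hmaps : Set.MapsTo (fun α : ℝ => (p : ℝ) * (1 - α)) (Set.Ico 0 1) (Set.Ioi 0) :=
    fun α hα => natCast_mul_one_sub_pos hp hα.2
  simpa only [Function.comp_def, gammaL_eq] using hγ.comp hscale hmaps

lemma gammaL_le_of_le (hε0 : 0 < ε) (hε1 : ε < 1) (hα : α < 1) {q : ℕ}
    (hp : 1 ≤ p) (hpq : p ≤ q) : gammaL n ε α q ≤ gammaL n ε α p := by
  have hγ := strictAntiOn_div_add_mul_log_add_one_div (log_one_div_pos hε0 hε1)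
    (by positivity : (0 : ℝ) ≤ 2 * n)
  have hpq' : (p : ℝ) * (1 - α) ≤ q * (1 - α) :=
    mul_le_mul_of_nonneg_right (by exact_mod_cast hpq) (by linarith)
  simpa only [gammaL_eq] using hγ.antitoneOn
    (natCast_mul_one_sub_pos hp hα) (natCast_mul_one_sub_pos (hp.trans hpq) hα) hpq'

lemma tendsto_gammaL_atTop (hα : α < 1) :
    Tendsto (fun p : ℕ => gammaL n ε α p) atTop (𝓝 0) := by
  simpa only [Function.comp_def, gammaL_eq] using
    (tendsto_div_add_mul_log_add_one_div_atTop _ _).comp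
      (tendsto_natCast_atTop_atTop.atTop_mul_const (by linarith : (0 : ℝ) < 1 - α))

end gammaL

lemma klFun_antitoneOn : AntitoneOn klFun (Set.Icc 0 1) := by
  refine antitoneOn_of_deriv_nonpos (convex_Icc 0 1) continuous_klFun.continuousOn
    (fun x hx => ?_) (fun x hx => ?_)
  · rw [interior_Icc] at hx
    exact (hasDerivAt_klFun hx.1.ne').differentiableAt.differentiableWithinAt
  · rw [interior_Icc] at hx
    rw [deriv_klFun]
    exact log_nonpos hx.1.le hx.2.le

lemma klFun_pos_of_lt_one {x : ℝ} (hx0 : 0 ≤ x) (hx1 : x < 1) : 0 < klFun x :=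
  (klFun_nonneg hx0).lt_of_ne' fun h => hx1.ne ((klFun_eq_zero_iff hx0).1 h)

section KL

variable {n : ℕ} {P Q : Fin n → ℝ}

lemma KL_eq_sum_mul_klFun (hQ : ∀ i, Q i ≠ 0) (hsum : ∑ i, P i = ∑ i, Q i) :
    KL P Q = ∑ i, Q i * klFun (P i / Q i) := by
  have hterm : ∀ i, Q i * klFun (P i / Q i) = P i * log (P i / Q i) + (Q i - P i) := by
    intro i
    rw [klFun_apply]
    field_simp [hQ i]
    ring
  simp only [hterm, Finset.sum_add_distrib, Finset.sum_sub_distrib, hsum, sub_self, add_zero, KL]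

lemma mul_klFun_le_KL (hP : ∀ i, 0 ≤ P i) (hQ : ∀ i, 0 < Q i)
    (hsum : ∑ i, P i = ∑ i, Q i) (i : Fin n) : Q i * klFun (P i / Q i) ≤ KL P Q := by
  rw [KL_eq_sum_mul_klFun (fun j => (hQ j).ne') hsum]
  exact Finset.single_le_sum (f := fun j => Q j * klFun (P j / Q j))
    (fun j _ => mul_nonneg (hQ j).le (klFun_nonneg (div_nonneg (hP j) (hQ j).le)))
    (Finset.mem_univ i)

lemma KL_nonneg (hP : ∀ i, 0 ≤ P i) (hQ : ∀ i, 0 < Q i) (hsum : ∑ i, P i = ∑ i, Q i) :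
    0 ≤ KL P Q := by
  rw [KL_eq_sum_mul_klFun (fun j => (hQ j).ne') hsum]
  exact Finset.sum_nonneg fun j _ =>
    mul_nonneg (hQ j).le (klFun_nonneg (div_nonneg (hP j) (hQ j).le))

lemma KL_self (hQ : ∀ i, Q i ≠ 0) : KL Q Q = 0 := by
  simp [KL, div_self, hQ]

end KL

section Dstar

variable {n : ℕ} [NeZero n] {Phat Q : Fin n → ℝ} {α : ℝ}

lemma Dstar_pos (hP : isPMF Phat) (hQ : isPMF Q) (hQpos : ∀ i, 0 < Q i)
    (hα0 : 0 ≤ α) (hα1 : α < 1) (hακ : α < sepDist Phat Q) : 0 < Dstar Phat Q α := by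
  have h1α : 0 < 1 - α := by linarith
  obtain ⟨i, -, hi⟩ := Finset.exists_mem_eq_sup' Finset.univ_nonempty fun i => 1 - Phat i / Q i
  set r := Phat i / (1 - α) / Q i
  have hr0 : 0 ≤ r := div_nonneg (div_nonneg (hP.1 i) h1α.le) (hQpos i).le
  have hr1 : r < 1 := by
    have : Phat i / Q i < 1 - α := by rw [sepDist, hi] at hακ; linarith
    rw [div_lt_one (hQpos i), div_lt_iff₀ h1α]
    rwa [div_lt_iff₀ (hQpos i), mul_comm] at this
  have hbound : ∀ P, isPMF P → (∀ j, P j ≤ Phat j / (1 - α)) →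
      Q i * klFun r ≤ KL P Q := by
    intro P hPpmf hPle
    have hx0 : 0 ≤ P i / Q i := div_nonneg (hPpmf.1 i) (hQpos i).le
    have hxr : P i / Q i ≤ r := div_le_div_of_nonneg_right (hPle i) (hQpos i).le
    calc Q i * klFun r
        ≤ Q i * klFun (P i / Q i) := mul_le_mul_of_nonneg_left
          (klFun_antitoneOn ⟨hx0, hxr.trans hr1.le⟩ ⟨hr0, hr1.le⟩ hxr) (hQpos i).le
      _ ≤ KL P Q := mul_klFun_le_KL hPpmf.1 hQpos (hPpmf.2.trans hQ.2.symm) i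
  have hPhat : Phat ∈ {P : Fin n → ℝ | isPMF P ∧ ∀ j, P j ≤ Phat j / (1 - α)} :=
    ⟨hP, fun j => (le_div_iff₀ h1α).2 (mul_le_of_le_one_right (hP.1 j) (by linarith))⟩
  calc 0 < Q i * klFun r := mul_pos (hQpos i) (klFun_pos_of_lt_one hr0 hr1)
    _ ≤ Dstar Phat Q α := le_csInf ⟨_, Phat, hPhat, rfl⟩ fun _ ⟨P, hPK, hPeq⟩ =>
        hPeq ▸ hbound P hPK.1 hPK.2

lemma Dstar_nonpos (hQ : isPMF Q) (hQpos : ∀ i, 0 < Q i) (hκα : sepDist Phat Q ≤ α)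
    (hα1 : α < 1) : Dstar Phat Q α ≤ 0 := by
  have h1α : 0 < 1 - α := by linarith
  have hQfeasible : ∀ i, Q i ≤ Phat i / (1 - α) := by
    intro i
    have hi : 1 - Phat i / Q i ≤ sepDist Phat Q := Finset.le_sup' (fun i => 1 - Phat i / Q i)
      (Finset.mem_univ i)
    have : 1 - α ≤ Phat i / Q i := by linarith
    rw [le_div_iff₀ h1α, mul_comm]
    rwa [le_div_iff₀ (hQpos i)] at this
  refine csInf_le ⟨0, ?_⟩ ⟨Q, ⟨hQ, hQfeasible⟩, KL_self fun i => (hQpos i).ne'⟩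
  rintro _ ⟨P, hPK, rfl⟩
  exact KL_nonneg hPK.1.1 hQpos (hPK.1.2.trans hQ.2.symm)

end Dstar

section alphaL

variable {n : ℕ} {Phat Q : Fin n → ℝ} {ε α : ℝ}

lemma le_alphaL {p : ℕ} (hα : α ∈ Set.Ico 0 1) (hγ : gammaL n ε α p ≤ Dstar Phat Q α) :
    α ≤ alphaL Phat Q ε p :=
  le_csSup ⟨1, fun _ hβ => hβ.1.2.le⟩ ⟨hα, hγ⟩

lemma alphaL_nonneg (p : ℕ) : 0 ≤ alphaL Phat Q ε p :=
  Real.sSup_nonneg fun _ hα => hα.1.1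

lemma alphaL_le_sepDist [NeZero n] (hQ : isPMF Q) (hQpos : ∀ i, 0 < Q i) (hε0 : 0 < ε) (hε1 : ε < 1)
    (hκ0 : 0 < sepDist Phat Q) {p : ℕ} (hp : 1 ≤ p) : alphaL Phat Q ε p ≤ sepDist Phat Q := by
  refine Real.sSup_le (fun α ⟨hα, hγ⟩ => ?_) hκ0.le
  by_contra! hκα
  have := Dstar_nonpos hQ hQpos hκα.le hα.2
  linarith [gammaL_pos (n := n) hε0 hε1 hp hα.2]

lemma alphaL_mono (hε0 : 0 < ε) (hε1 : ε < 1) {p q : ℕ} (hp : 1 ≤ p) (hpq : p ≤ q) :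
    alphaL Phat Q ε p ≤ alphaL Phat Q ε q :=
  Real.sSup_le (fun _ ⟨hα, hγ⟩ =>
    le_alphaL hα ((gammaL_le_of_le hε0 hε1 hα.2 hp hpq).trans hγ)) (alphaL_nonneg q)

lemma eventually_le_alphaL [NeZero n] (hP : isPMF Phat) (hQ : isPMF Q) (hQpos : ∀ i, 0 < Q i)
    (hα0 : 0 ≤ α) (hα1 : α < 1) (hακ : α < sepDist Phat Q) :
    ∀ᶠ p in atTop, α ≤ alphaL Phat Q ε p := by
  filter_upwards [(tendsto_gammaL_atTop hα1).eventually_lt_const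
    (Dstar_pos hP hQ hQpos hα0 hα1 hακ)] with p hγ
  exact le_alphaL ⟨hα0, hα1⟩ hγ.le

lemma tendsto_alphaL_atTop [NeZero n] (hP : isPMF Phat) (hQ : isPMF Q) (hQpos : ∀ i, 0 < Q i)
    (hε0 : 0 < ε) (hε1 : ε < 1) (hκ0 : 0 < sepDist Phat Q) (hκ1 : sepDist Phat Q < 1) :
    Tendsto (fun p : ℕ => alphaL Phat Q ε p) atTop (𝓝 (sepDist Phat Q)) := by
  refine tendsto_order.2 ⟨fun a ha => ?_, fun a ha => ?_⟩
  · obtain ⟨α, hα, hακ⟩ := exists_between (max_lt ha hκ0)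
    filter_upwards [eventually_le_alphaL hP hQ hQpos ((le_max_right a 0).trans hα.le)
      (hακ.trans hκ1) hακ] with p hp
    exact ((le_max_left a 0).trans_lt hα).trans_le hp
  · filter_upwards [eventually_ge_atTop 1] with p hp
    exact (alphaL_le_sepDist hQ hQpos hε0 hε1 hκ0 hp).trans_lt ha

end alphaL

theorem gamma_and_alphaL_asymptotics {n : ℕ} [NeZero n] (Phat Q : Fin n → ℝ) (ε : ℝ)
    (hP : isPMF Phat) (hQ : isPMF Q) (hQpos : ∀ i, 0 < Q i)
    (hε0 : 0 < ε) (hε1 : ε < 1)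
    (hκ0 : 0 < sepDist Phat Q) (hκ1 : sepDist Phat Q < 1) :
    (∀ p : ℕ, 1 ≤ p → StrictMonoOn (fun α => gammaL n ε α p) (Set.Ico (0 : ℝ) 1)) ∧
      (∀ α : ℝ, α ∈ Set.Ico (0 : ℝ) 1 →
        Filter.Tendsto (fun p : ℕ => gammaL n ε α p) Filter.atTop (nhds 0)) ∧
      (∀ p q : ℕ, 1 ≤ p → p ≤ q → alphaL Phat Q ε p ≤ alphaL Phat Q ε q) ∧
      Filter.Tendsto (fun p : ℕ => alphaL Phat Q ε p) Filter.atTop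
        (nhds (sepDist Phat Q)) ∧
      (∀ p : ℕ, 1 ≤ p → alphaL Phat Q ε p ≤ sepDist Phat Q) :=
  ⟨fun _ hp => gammaL_strictMonoOn hε0 hε1 hp,
    fun _ hα => tendsto_gammaL_atTop hα.2,
    fun _ _ hp hpq => alphaL_mono hε0 hε1 hp hpq,
    tendsto_alphaL_atTop hP hQ hQpos hε0 hε1 hκ0 hκ1,
    fun _ hp => alphaL_le_sepDist hQ hQpos hε0 hε1 hκ0 hp⟩
end
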